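/- arXiv:1609.00715 — 2 statements merged into one kernel-verified Lean document; each statement's English description precedes it below -/
import Mathlib

section
/- Let r ≥ 1 be an integer, p, q nonzero complex numbers with |p| < 1, |q| < 1, and m ∈ ℤ. For every nonzero z ∈ ℂ that is not a pole of either factor, γ^{(r)}(z, m; p,q) · γ^{(r)}(pq z^{-1}, r−m; p,q) = 1. -/
open Complex Finset

noncomputable section

/-- The infinite q-Pochhammer symbol `(z;p)_∞ = ∏_{j≥0} (1 - z p^j)`. -/
def qPochInf (z p : ℂ) : ℂ := ∏' j : ℕ, (1 - z * p ^ j)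

/-- The theta function `θ(z;p) = (z;p)_∞ (p z⁻¹; p)_∞`. -/
def theta0 (z p : ℂ) : ℂ := qPochInf z p * qPochInf (p * z⁻¹) p

/-- The elliptic gamma function `Γ(z;p,q)`. -/
def ellGamma (z p q : ℂ) : ℂ :=
  ∏' jk : ℕ × ℕ,
    (1 - z⁻¹ * p ^ (jk.1 + 1) * q ^ (jk.2 + 1)) / (1 - z * p ^ jk.1 * q ^ jk.2)

/-- The second order elliptic gamma function `Γ(z;p,q,t)`. -/
def ellGamma3 (z p q t : ℂ) : ℂ :=
  ∏' x : ℕ × ℕ × ℕ,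
    (1 - z * p ^ x.1 * q ^ x.2.1 * t ^ x.2.2) *
      (1 - z⁻¹ * p ^ (x.1 + 1) * q ^ (x.2.1 + 1) * t ^ (x.2.2 + 1))

/-- The lens space elliptic gamma function `γ^{(r)}(z,m;p,q)`. -/
def lensGamma (r : ℕ) (z : ℂ) (m : ℤ) (p q : ℂ) : ℂ :=
  ellGamma (z * p ^ m) (p ^ r) (p * q) * ellGamma (z * q ^ ((r : ℤ) - m)) (q ^ r) (p * q)

/-- The rarefied elliptic gamma function `Γ^{(r)}(z,m;p,q)`, built with fixed
square roots σ, τ satisfying `σ² = pq`, `τ² = p/q`, `στ = p`. -/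
def rarGamma (r : ℕ) (z : ℂ) (m : ℤ) (p q σ τ : ℂ) : ℂ :=
  (-z / σ) ^ (m * (m - 1) / 2) * τ ^ (m * (m - 1) * (2 * m - 1) / 6) * lensGamma r z m p q

/-- `w` avoids the pole set `{P^{-j} Q^{-k} : j,k ≥ 0}` of `ellGamma w P Q`. -/
def notPole (w P Q : ℂ) : Prop := ∀ j k : ℕ, w ≠ P ^ (-(j : ℤ)) * Q ^ (-(k : ℤ))

/-- `z` is not a pole of either elliptic gamma factor of `lensGamma r z m p q`. -/
def lensReg (r : ℕ) (z : ℂ) (m : ℤ) (p q : ℂ) : Prop :=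
  notPole (z * p ^ m) (p ^ r) (p * q) ∧ notPole (z * q ^ ((r : ℤ) - m)) (q ^ r) (p * q)

/-! Both elliptic gamma factors are quotients `∏(1 - aᵢ) / ∏(1 - bᵢ)` of absolutely convergent
products with nonzero values, and passing from `w` to `P Q / w` swaps the families `a` and `b`.
Hence each factor of `γ^{(r)}(P Q / z, r - m)` is the reciprocal of the matching factor of
`γ^{(r)}(z, m)`. -/

section OneSubProducts

variable {ι : Type*} {a b : ι → ℂ}

lemma multipliable_one_sub_of_summable (ha : Summable a) : Multipliable fun i ↦ 1 - a i := by
  simpa only [sub_eq_add_neg] using Complex.multipliable_one_add_of_summable ha.neg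

lemma tprod_one_sub_ne_zero (ha : Summable a) (ha1 : ∀ i, a i ≠ 1) : ∏' i, (1 - a i) ≠ 0 := by
  have h := tprod_one_add_ne_zero_of_summable (f := fun i ↦ -a i)
    (fun i ↦ by rw [← sub_eq_add_neg]; exact sub_ne_zero.2 (ha1 i).symm)
    (summable_norm_iff.2 ha.neg)
  simpa only [← sub_eq_add_neg] using h

lemma tprod_one_sub_div_mul_tprod_one_sub_div (ha : Summable a) (hb : Summable b)
    (ha1 : ∀ i, a i ≠ 1) (hb1 : ∀ i, b i ≠ 1) :
    (∏' i, (1 - a i) / (1 - b i)) * ∏' i, (1 - b i) / (1 - a i) = 1 := by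
  have hA := tprod_one_sub_ne_zero ha ha1
  have hB := tprod_one_sub_ne_zero hb hb1
  rw [(multipliable_one_sub_of_summable ha).tprod_div₀ (multipliable_one_sub_of_summable hb) hB,
    (multipliable_one_sub_of_summable hb).tprod_div₀ (multipliable_one_sub_of_summable ha) hA,
    div_mul_div_comm, mul_comm, div_self (mul_ne_zero hB hA)]

end OneSubProducts

lemma summable_mul_pow_mul_pow (c : ℂ) {P Q : ℂ} (hP : ‖P‖ < 1) (hQ : ‖Q‖ < 1) :
    Summable fun jk : ℕ × ℕ ↦ c * P ^ jk.1 * Q ^ jk.2 := by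
  have hcP : Summable fun j : ℕ ↦ ‖c * P ^ j‖ := by
    simpa only [norm_mul, norm_pow] using
      (summable_geometric_of_lt_one (norm_nonneg P) hP).mul_left ‖c‖
  have hQ' : Summable fun k : ℕ ↦ ‖Q ^ k‖ := by
    simpa only [norm_pow] using summable_geometric_of_lt_one (norm_nonneg Q) hQ
  exact summable_mul_of_summable_norm (f := fun j ↦ c * P ^ j) (g := fun k ↦ Q ^ k) hcP hQ'

lemma notPole.mul_pow_mul_pow_ne_one {w P Q : ℂ} (h : notPole w P Q) (j k : ℕ) :
    w * P ^ j * Q ^ k ≠ 1 := by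
  intro h1
  apply h j k
  rw [zpow_neg, zpow_neg, zpow_natCast, zpow_natCast, ← mul_inv]
  exact eq_inv_of_mul_eq_one_left (by rwa [← mul_assoc])

lemma ellGamma_inversion {P Q : ℂ} (w : ℂ) (hP : P ≠ 0) (hQ : Q ≠ 0) (hP1 : ‖P‖ < 1)
    (hQ1 : ‖Q‖ < 1) (hw : notPole w P Q) (hw' : notPole (P * Q * w⁻¹) P Q) :
    ellGamma w P Q * ellGamma (P * Q * w⁻¹) P Q = 1 := by
  have hswap : ellGamma (P * Q * w⁻¹) P Q = ∏' jk : ℕ × ℕ,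
      (1 - w * P ^ jk.1 * Q ^ jk.2) / (1 - w⁻¹ * P ^ (jk.1 + 1) * Q ^ (jk.2 + 1)) := by
    refine tprod_congr fun jk ↦ ?_
    congr 2 <;> · field_simp; ring
  rw [hswap]
  refine tprod_one_sub_div_mul_tprod_one_sub_div ?_ (summable_mul_pow_mul_pow w hP1 hQ1) ?_
    (fun jk ↦ hw.mul_pow_mul_pow_ne_one jk.1 jk.2)
  · exact (summable_mul_pow_mul_pow (w⁻¹ * P * Q) hP1 hQ1).congr fun jk ↦ by ring
  · intro jk
    convert hw'.mul_pow_mul_pow_ne_one jk.1 jk.2 using 1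
    ring

theorem lensGamma_inversion_general
    (r : ℕ) (hr : 1 ≤ r) (p q : ℂ) (hp : p ≠ 0) (hq : q ≠ 0)
    (hp1 : ‖p‖ < 1) (hq1 : ‖q‖ < 1)
    (m : ℤ) (z : ℂ)
    (hreg1 : lensReg r z m p q)
    (hreg2 : lensReg r (p * q * z⁻¹) ((r : ℤ) - m) p q) :
    lensGamma r z m p q * lensGamma r (p * q * z⁻¹) ((r : ℤ) - m) p q = 1 := by
  have hpr : ‖p ^ r‖ < 1 := by rw [norm_pow]; exact pow_lt_one₀ (norm_nonneg p) hp1 (by omega)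
  have hqr : ‖q ^ r‖ < 1 := by rw [norm_pow]; exact pow_lt_one₀ (norm_nonneg q) hq1 (by omega)
  have hpq : ‖p * q‖ < 1 := by
    rw [norm_mul]; exact mul_lt_one_of_nonneg_of_lt_one_left (norm_nonneg p) hp1 hq1.le
  have hargp : p * q * z⁻¹ * p ^ ((r : ℤ) - m) = p ^ r * (p * q) * (z * p ^ m)⁻¹ := by
    rw [zpow_sub₀ hp, zpow_natCast]; ring
  have hargq : p * q * z⁻¹ * q ^ ((r : ℤ) - ((r : ℤ) - m)) =
      q ^ r * (p * q) * (z * q ^ ((r : ℤ) - m))⁻¹ := by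
    rw [sub_sub_cancel, zpow_sub₀ hq, zpow_natCast]; field_simp
  obtain ⟨hw1, hw2⟩ := hreg1
  obtain ⟨hw1', hw2'⟩ := hreg2
  rw [hargp] at hw1'
  rw [hargq] at hw2'
  unfold lensGamma
  rw [hargp, hargq, mul_mul_mul_comm,
    ellGamma_inversion _ (pow_ne_zero r hp) (mul_ne_zero hp hq) hpr hpq hw1 hw1',
    ellGamma_inversion _ (pow_ne_zero r hq) (mul_ne_zero hp hq) hqr hpq hw2 hw2', one_mul]

/-- The inversion relation for the lens-space elliptic gamma function:
`γ^{(r)}(z,m) γ^{(r)}(pq/z, r−m) = 1`. -/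
theorem lensGamma_inversion
    (r : ℕ) (hr : 1 ≤ r) (p q : ℂ) (hp : p ≠ 0) (hq : q ≠ 0)
    (hp1 : ‖p‖ < 1) (hq1 : ‖q‖ < 1)
    (m : ℤ) (z : ℂ) (hz : z ≠ 0)
    (hreg1 : lensReg r z m p q)
    (hreg2 : lensReg r (p * q * z⁻¹) ((r : ℤ) - m) p q) :
    lensGamma r z m p q * lensGamma r (p * q * z⁻¹) ((r : ℤ) - m) p q = 1 :=
  lensGamma_inversion_general r hr p q hp hq hp1 hq1 m z hreg1 hreg2
end
end

section
/- Let r ≥ 1 be an integer, p, q nonzero complex numbers with |p| < 1, |q| < 1, and let m ∈ ℤ with 0 ≤ m ≤ r. For every nonzero z ∈ ℂ not a pole of either side, γ^{(r)}(z, m; p,q) = ∏_{k=0}^{m−1} Γ(q^{r−m} z (pq)^k; p^r, q^r) · ∏_{k=0}^{r−m−1} Γ(p^m z (pq)^k; p^r, q^r). -/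
/-!
With the double Pochhammer symbol `(w; x, y)_∞ = ∏_{j,k} (1 - w x^j y^k)` one has
`Γ(w; x, y) = (w⁻¹xy; x, y)_∞ / (w; x, y)_∞`, so the identity splits into one for the
denominators and one for the numerators. Put `r = m + n`. The two denominators on the left are
products of `1 - z p^a q^b` over the pairs `(a, b)` in the class `a - b ≡ m (mod r)` with
`a - b ≥ m`, resp. `b - a ≥ n`; together these pairs make up the whole class. Sorting the class
instead by the residue of `a` mod `r` gives the `r` denominators on the right. The numerators
obey the same identity for `z⁻¹pq` in place of `z` and with `m` and `n` exchanged, the factors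
on the right coming in reverse order. Since `‖p‖, ‖q‖ < 1` all products converge absolutely, so
they may be regrouped freely.
-/

open Complex Finset

noncomputable section

open Function

def residuePairs (m n : ℕ) : Set (ℕ × ℕ) := {x | x.1 ≡ x.2 + m [MOD m + n]}

def coneParam (m n : ℕ) : (ℕ × ℕ) ⊕ (ℕ × ℕ) → ℕ × ℕ :=
  Sum.elim (fun x => (m + (m + n) * x.1 + x.2, x.2)) (fun x => (x.2, n + (m + n) * x.1 + x.2))

def residueParam (m n : ℕ) : Fin (m + n) × (ℕ × ℕ) → ℕ × ℕ :=
  fun c => (c.1 + (m + n) * c.2.1, (c.1 + n) % (m + n) + (m + n) * c.2.2)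

section Lattice

variable {m n : ℕ}

theorem coneParam_injective (h : 0 < m + n) : Injective (coneParam m n) := by
  rintro (⟨j, k⟩ | ⟨j, k⟩) (⟨j', k'⟩ | ⟨j', k'⟩) hc <;>
    simp only [coneParam, Sum.elim_inl, Sum.elim_inr, Prod.mk.injEq] at hc <;>
    obtain ⟨h1, h2⟩ := hc
  · subst h2
    simp [Nat.eq_of_mul_eq_mul_left h (by omega : (m + n) * j = (m + n) * j')]
  -- the cones `a - b ≥ m` and `b - a ≥ n` are disjoint
  · nlinarith
  · nlinarith
  · subst h1
    simp [Nat.eq_of_mul_eq_mul_left h (by omega : (m + n) * j = (m + n) * j')]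

theorem range_coneParam : Set.range (coneParam m n) = residuePairs m n := by
  ext ⟨a, b⟩
  simp only [residuePairs, Set.mem_ofPred_eq, Nat.modEq_iff_dvd, Set.mem_range]
  constructor
  · rintro ⟨⟨j, k⟩ | ⟨j, k⟩, hc⟩ <;>
      simp only [coneParam, Sum.elim_inl, Sum.elim_inr, Prod.mk.injEq] at hc <;>
      obtain ⟨rfl, rfl⟩ := hc
    · exact ⟨-j, by push_cast; ring⟩
    · exact ⟨j + 1, by push_cast; ring⟩
  · rintro ⟨t, ht⟩
    rcases le_or_gt t 0 with ht0 | ht0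
    · obtain ⟨j, rfl⟩ := Int.exists_eq_neg_ofNat ht0
      refine ⟨.inl (j, b), Prod.ext ?_ rfl⟩
      have : ((m + (m + n) * j + b : ℕ) : ℤ) = a := by push_cast at ht ⊢; linear_combination ht
      exact_mod_cast this
    · obtain ⟨j, rfl⟩ : ∃ j : ℕ, t = j + 1 := ⟨(t - 1).toNat, by omega⟩
      refine ⟨.inr (j, a), Prod.ext rfl ?_⟩
      have : ((n + (m + n) * j + a : ℕ) : ℤ) = b := by push_cast at ht ⊢; linear_combination -ht
      exact_mod_cast this

theorem residueParam_injective : Injective (residueParam m n) := by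
  rintro ⟨k, j, l⟩ ⟨k', j', l'⟩ hc
  simp only [residueParam, Prod.mk.injEq] at hc
  obtain ⟨h1, h2⟩ := hc
  have hr := k.pos
  have hk : k = k' := Fin.ext <| by
    simpa [Nat.mod_eq_of_lt k.2, Nat.mod_eq_of_lt k'.2] using congrArg (· % (m + n)) h1
  subst hk
  have hj := Nat.eq_of_mul_eq_mul_left hr (Nat.add_left_cancel h1)
  have hl := Nat.eq_of_mul_eq_mul_left hr (Nat.add_left_cancel h2)
  rw [hj, hl]

theorem range_residueParam (h : 0 < m + n) : Set.range (residueParam m n) = residuePairs m n := by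
  ext ⟨a, b⟩
  simp only [residuePairs, Set.mem_ofPred_eq, Set.mem_range]
  constructor
  · rintro ⟨⟨k, j, l⟩, hc⟩
    simp only [residueParam, Prod.mk.injEq] at hc
    obtain ⟨rfl, rfl⟩ := hc
    have hdiv := Nat.mod_add_div (k + n) (m + n)
    rw [Nat.modEq_iff_dvd]
    refine ⟨1 - ((k + n) / (m + n) : ℕ) + l - j, ?_⟩
    have : (((k + n) % (m + n) + (m + n) * ((k + n) / (m + n)) : ℕ) : ℤ) = k + n := by
      exact_mod_cast hdiv
    push_cast at this ⊢
    linear_combination this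
  · intro hab
    refine ⟨(⟨a % (m + n), Nat.mod_lt _ h⟩, a / (m + n), b / (m + n)), Prod.ext ?_ ?_⟩
    · exact Nat.mod_add_div a (m + n)
    · show (a % (m + n) + n) % (m + n) + (m + n) * (b / (m + n)) = b
      suffices a % (m + n) + n ≡ b [MOD m + n] by rw [this, Nat.mod_add_div]
      calc a % (m + n) + n ≡ a + n [MOD m + n] := (Nat.mod_modEq a _).add_right n
        _ ≡ b + m + n [MOD m + n] := hab.add_right n
        _ = b + (m + n) := by ring
        _ ≡ b [MOD m + n] := Nat.add_modulus_modEq_iff.2 rfl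

end Lattice

section InfiniteProduct

variable {ι R : Type*}

theorem multipliable_of_summable_norm_sub_one [NormedCommRing R] [NormOneClass R]
    [CompleteSpace R] {f : ι → R} (hf : Summable (‖f · - 1‖)) : Multipliable f := by
  simpa using multipliable_one_add_of_summable hf

theorem tprod_div_of_summable_norm_sub_one {K : Type*} [NormedField K] [CompleteSpace K]
    {f g : ι → K} (hf : Summable (‖f · - 1‖)) (hg : Summable (‖g · - 1‖)) :
    ∏' i, f i / g i = (∏' i, f i) / ∏' i, g i := by
  by_cases hg0 : ∃ i, g i = 0
  -- both sides vanish, the left one because `x / 0 = 0`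
  · obtain ⟨i, hi⟩ := hg0
    rw [tprod_of_exists_eq_zero ⟨i, hi⟩, div_zero, tprod_of_exists_eq_zero ⟨i, by simp [hi]⟩]
  · refine (multipliable_of_summable_norm_sub_one hf).tprod_div₀
      (multipliable_of_summable_norm_sub_one hg) ?_
    simpa using tprod_one_add_ne_zero_of_summable (f := (g · - 1)) (by simpa using hg0) hg

end InfiniteProduct

theorem tprod_coneParam_eq_prod_tprod_residueParam {R : Type*} [NormedCommRing R] [NormOneClass R]
    [CompleteSpace R] {m n : ℕ} (h : 0 < m + n) {F : ℕ × ℕ → R} (hF : Summable (‖F · - 1‖)) :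
    (∏' x : ℕ × ℕ, F (m + (m + n) * x.1 + x.2, x.2)) *
        ∏' x : ℕ × ℕ, F (x.2, n + (m + n) * x.1 + x.2) =
      (∏ k ∈ range m, ∏' x : ℕ × ℕ, F (k + (m + n) * x.1, n + k + (m + n) * x.2)) *
        ∏ k ∈ range n, ∏' x : ℕ × ℕ, F (m + k + (m + n) * x.1, k + (m + n) * x.2) := by
  have hmul {α : Type} {Φ : α → ℕ × ℕ} (hΦ : Injective Φ) : Multipliable fun a => F (Φ a) :=
    multipliable_of_summable_norm_sub_one (hF.comp_injective hΦ)
  have hslice (k : Fin (m + n)) : Multipliable fun x => F (residueParam m n (k, x)) :=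
    hmul (residueParam_injective.comp (Prod.mk_right_injective k))
  have hcone : ∏' c, F (coneParam m n c) =
      (∏' x : ℕ × ℕ, F (m + (m + n) * x.1 + x.2, x.2)) *
        ∏' x : ℕ × ℕ, F (x.2, n + (m + n) * x.1 + x.2) :=
    Multipliable.tprod_sum (hmul ((coneParam_injective h).comp Sum.inl_injective))
      (hmul ((coneParam_injective h).comp Sum.inr_injective))
  rw [← hcone, ← tprod_range F (coneParam_injective h), range_coneParam, ← range_residueParam h,
    tprod_range F residueParam_injective,
    Multipliable.tprod_prod' (f := fun c => F (residueParam m n c)) (hmul residueParam_injective)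
      hslice, tprod_fintype, Fin.prod_univ_add, ← Fin.prod_univ_eq_prod_range,
    ← Fin.prod_univ_eq_prod_range]
  congr 1 <;> refine Finset.prod_congr rfl fun k _ => tprod_congr fun x => congrArg F ?_
  · have hk : (k + n) % (m + n) = n + k := by
      rw [Nat.mod_eq_of_lt (by omega), add_comm]
    simp [residueParam, hk]
  · have hk : (m + k + n) % (m + n) = k := by
      rw [add_right_comm, Nat.add_mod_left, Nat.mod_eq_of_lt (by omega)]
    simp [residueParam, hk]

def doubleQPochInf (w x y : ℂ) : ℂ := ∏' jk : ℕ × ℕ, (1 - w * x ^ jk.1 * y ^ jk.2)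

theorem summable_norm_doubleQPochInf_factor_sub_one (w : ℂ) {x y : ℂ} (hx : ‖x‖ < 1)
    (hy : ‖y‖ < 1) : Summable fun jk : ℕ × ℕ => ‖(1 - w * x ^ jk.1 * y ^ jk.2) - 1‖ := by
  have hgeom := (summable_geometric_of_lt_one (norm_nonneg x) hx).mul_of_nonneg
    (summable_geometric_of_lt_one (norm_nonneg y) hy) (fun _ => by positivity)
    (fun _ => by positivity)
  refine (hgeom.mul_left ‖w‖).congr fun jk => ?_
  simp [norm_pow, mul_assoc]

theorem ellGamma_eq_div (w : ℂ) {x y : ℂ} (hx : ‖x‖ < 1) (hy : ‖y‖ < 1) :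
    ellGamma w x y = doubleQPochInf (w⁻¹ * x * y) x y / doubleQPochInf w x y := by
  have hnum : Summable fun jk : ℕ × ℕ => ‖(1 - w⁻¹ * x ^ (jk.1 + 1) * y ^ (jk.2 + 1)) - 1‖ :=
    (summable_norm_doubleQPochInf_factor_sub_one (w⁻¹ * x * y) hx hy).congr fun jk => by
      ring_nf
  rw [ellGamma, tprod_div_of_summable_norm_sub_one hnum
    (summable_norm_doubleQPochInf_factor_sub_one w hx hy), doubleQPochInf, doubleQPochInf]
  congr 2 with jk
  ring

theorem doubleQPochInf_mul_doubleQPochInf {m n : ℕ} (h : 0 < m + n) (z : ℂ) {p q : ℂ}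
    (hp : ‖p‖ < 1) (hq : ‖q‖ < 1) :
    doubleQPochInf (z * p ^ m) (p ^ (m + n)) (p * q) *
        doubleQPochInf (z * q ^ n) (q ^ (m + n)) (p * q) =
      (∏ k ∈ range m, doubleQPochInf (q ^ n * z * (p * q) ^ k) (p ^ (m + n)) (q ^ (m + n))) *
        ∏ k ∈ range n, doubleQPochInf (p ^ m * z * (p * q) ^ k) (p ^ (m + n)) (q ^ (m + n)) := by
  have key := tprod_coneParam_eq_prod_tprod_residueParam h
    (summable_norm_doubleQPochInf_factor_sub_one z hp hq)
  dsimp only at key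
  simp only [doubleQPochInf]
  convert key using 2
  · exact tprod_congr fun x => by ring
  · exact tprod_congr fun x => by ring
  · exact prod_congr rfl fun k _ => tprod_congr fun x => by ring
  · exact prod_congr rfl fun k _ => tprod_congr fun x => by ring

theorem doubleQPochInf_inv_mul_doubleQPochInf_inv {m n : ℕ} (h : 0 < m + n) (z : ℂ) {p q : ℂ}
    (hp0 : p ≠ 0) (hq0 : q ≠ 0) (hp : ‖p‖ < 1) (hq : ‖q‖ < 1) :
    doubleQPochInf ((z * p ^ m)⁻¹ * p ^ (m + n) * (p * q)) (p ^ (m + n)) (p * q) *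
        doubleQPochInf ((z * q ^ n)⁻¹ * q ^ (m + n) * (p * q)) (q ^ (m + n)) (p * q) =
      (∏ k ∈ range m, doubleQPochInf ((q ^ n * z * (p * q) ^ k)⁻¹ * p ^ (m + n) * q ^ (m + n))
          (p ^ (m + n)) (q ^ (m + n))) *
        ∏ k ∈ range n, doubleQPochInf ((p ^ m * z * (p * q) ^ k)⁻¹ * p ^ (m + n) * q ^ (m + n))
          (p ^ (m + n)) (q ^ (m + n)) := by
  set w := z⁻¹ * p * q
  calc _ = doubleQPochInf (w * p ^ n) (p ^ (n + m)) (p * q) *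
        doubleQPochInf (w * q ^ m) (q ^ (n + m)) (p * q) := by
        rw [add_comm n m]; congr 2 <;> field_simp <;> ring
    _ = (∏ k ∈ range n, doubleQPochInf (q ^ m * w * (p * q) ^ k) (p ^ (n + m)) (q ^ (n + m))) *
        ∏ k ∈ range m, doubleQPochInf (p ^ n * w * (p * q) ^ k) (p ^ (n + m)) (q ^ (n + m)) :=
        doubleQPochInf_mul_doubleQPochInf (by omega) w hp hq
    _ = _ := by
        rw [mul_comm, add_comm n m]
        congr 1 <;> rw [← prod_range_reflect] <;>
          refine prod_congr rfl fun k hk => congrArg (doubleQPochInf · _ _) ?_ <;>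
          obtain ⟨d, rfl⟩ := Nat.exists_eq_add_of_lt (mem_range.1 hk) <;>
          rw [show k + d + 1 - 1 - k = d by omega] <;> field_simp <;> ring

theorem lensGamma_as_product_of_ellGamma_general
    (r : ℕ) (hr : 1 ≤ r) (p q : ℂ) (hp : p ≠ 0) (hq : q ≠ 0)
    (hp1 : ‖p‖ < 1) (hq1 : ‖q‖ < 1)
    (m : ℕ) (hm : m ≤ r) (z : ℂ) :
    lensGamma r z (m : ℤ) p q =
      (∏ k ∈ Finset.range m,
          ellGamma (q ^ ((r : ℤ) - (m : ℤ)) * z * (p * q) ^ k) (p ^ r) (q ^ r)) *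
        ∏ k ∈ Finset.range (r - m),
          ellGamma (p ^ (m : ℤ) * z * (p * q) ^ k) (p ^ r) (q ^ r) := by
  obtain ⟨n, rfl⟩ := Nat.exists_eq_add_of_le hm
  have hpr : ‖p ^ (m + n)‖ < 1 := by rw [norm_pow]; exact pow_lt_one₀ (norm_nonneg p) hp1 (by omega)
  have hqr : ‖q ^ (m + n)‖ < 1 := by rw [norm_pow]; exact pow_lt_one₀ (norm_nonneg q) hq1 (by omega)
  have hpq : ‖p * q‖ < 1 := by
    rw [norm_mul]; exact mul_lt_one_of_nonneg_of_lt_one_left (norm_nonneg p) hp1 hq1.le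
  have hn : ((m + n : ℕ) : ℤ) - m = n := by push_cast; ring
  simp only [lensGamma, hn, zpow_natCast, add_tsub_cancel_left]
  rw [ellGamma_eq_div _ hpr hpq, ellGamma_eq_div _ hqr hpq,
    prod_congr rfl fun k _ => ellGamma_eq_div _ hpr hqr,
    prod_congr rfl fun k _ => ellGamma_eq_div _ hpr hqr, prod_div_distrib, prod_div_distrib,
    div_mul_div_comm, div_mul_div_comm,
    doubleQPochInf_inv_mul_doubleQPochInf_inv (by omega) z hp hq hp1 hq1,
    doubleQPochInf_mul_doubleQPochInf (by omega) z hp1 hq1]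

/-- For `0 ≤ m ≤ r`, the lens-space elliptic gamma function is a finite product of
ordinary elliptic gamma functions with bases `p^r` and `q^r` (formula (3.5)). -/
theorem lensGamma_as_product_of_ellGamma
    (r : ℕ) (hr : 1 ≤ r) (p q : ℂ) (hp : p ≠ 0) (hq : q ≠ 0)
    (hp1 : ‖p‖ < 1) (hq1 : ‖q‖ < 1)
    (m : ℕ) (hm : m ≤ r) (z : ℂ) (hz : z ≠ 0)
    (hreg : lensReg r z (m : ℤ) p q)
    (hreg1 : ∀ k ∈ Finset.range m,
      notPole (q ^ ((r : ℤ) - (m : ℤ)) * z * (p * q) ^ k) (p ^ r) (q ^ r))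
    (hreg2 : ∀ k ∈ Finset.range (r - m),
      notPole (p ^ (m : ℤ) * z * (p * q) ^ k) (p ^ r) (q ^ r)) :
    lensGamma r z (m : ℤ) p q =
      (∏ k ∈ Finset.range m,
          ellGamma (q ^ ((r : ℤ) - (m : ℤ)) * z * (p * q) ^ k) (p ^ r) (q ^ r)) *
        ∏ k ∈ Finset.range (r - m),
          ellGamma (p ^ (m : ℤ) * z * (p * q) ^ k) (p ^ r) (q ^ r) :=
  lensGamma_as_product_of_ellGamma_general r hr p q hp hq hp1 hq1 m hm z
end
end
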